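/- Let x ≠ y ∈ ℝ^P with the same 'marked' coordinates along A, and suppose all lattice points of each fundamental type C marked chain-order polytope are exactly the indicator vectors 1_{M_O(J)}, J ∈ 𝒥ₖ. Then the monomials z^{ξ(1_{M_O(J)})} = Π_{i=1}^k z_{i, w^{O,J}(i)}, over all J ∈ 𝒥ₖ and all k, are pairwise distinct. -/

import Mathlib

open scoped Classical Pointwise

noncomputable section

/-- Position of `j` in the total order `1 ⋖ … ⋖ n ⋖ -n ⋖ … ⋖ -1` on `N`. -/
def ordKey (n : ℕ) (j : ℤ) : ℤ := if 0 < j then j else 2 * n + 1 + j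

/-- Membership in the type C Gelfand–Tsetlin poset `P`:
pairs `(i,j)` with `1 ≤ i ≤ n` and `i ≤ |j| ≤ n`. -/
def inP (n : ℕ) (p : ℤ × ℤ) : Prop :=
  1 ≤ p.1 ∧ p.1 ≤ (n : ℤ) ∧ p.1 ≤ |p.2| ∧ |p.2| ≤ (n : ℤ)

/-- The order relation `⪯` of `P`: `(i₁,j₁) ⪯ (i₂,j₂)` iff `i₁ ≤ i₂` and `j₁ ⩽̇ j₂`. -/
def ple (n : ℕ) (p q : ℤ × ℤ) : Prop :=
  p.1 ≤ q.1 ∧ ordKey n p.2 ≤ ordKey n q.2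

/-- Strict version of `⪯`. -/
def plt (n : ℕ) (p q : ℤ × ℤ) : Prop := ple n p q ∧ p ≠ q

/-- The elements of `N = {1,…,n,-n,…,-1}` listed in increasing `⋖` order. -/
def jList (n : ℕ) : List ℤ :=
  ((List.range n).map fun t => (t : ℤ) + 1) ++ ((List.range n).map fun t => (t : ℤ) - n)

/-- All pairs `(i,j)` with `i ∈ [1,n]`, `j ∈ N`, ordered first by `i` increasing,
then by `j` increasing with respect to `⋖`. -/
def posList (n : ℕ) : List (ℤ × ℤ) :=
  (List.range n).flatMap fun a => (jList n).map fun j => ((a : ℤ) + 1, j)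

/-- `P` as a finite set. -/
def Pfin (n : ℕ) : Finset (ℤ × ℤ) := (posList n).toFinset.filter (inP n)

/-- `N` as a finite set. -/
def Nfin (n : ℕ) : Finset ℤ := (jList n).toFinset

/-- The diagonal `A = {(i,i) : 1 ≤ i ≤ n}`. -/
def Aset (n : ℕ) : Finset (ℤ × ℤ) :=
  (Finset.range n).image fun t => (((t : ℤ) + 1, (t : ℤ) + 1) : ℤ × ℤ)

/-- Order ideals (downward closed subsets) of `P`. -/
def IsIdeal (n : ℕ) (J : Finset (ℤ × ℤ)) : Prop :=
  (∀ p ∈ J, inP n p) ∧ ∀ p ∈ J, ∀ q ∈ Pfin n, ple n q p → q ∈ J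

/-- The set of `≺`-maximal elements of `J`. -/
def maxPrec (n : ℕ) (J : Finset (ℤ × ℤ)) : Finset (ℤ × ℤ) :=
  J.filter fun p => ∀ q ∈ J, ple n p q → q = p

/-- `M_O(J) = (J ∩ O) ∪ max_≺(J)`. -/
def MO (n : ℕ) (O J : Finset (ℤ × ℤ)) : Finset (ℤ × ℤ) := (J ∩ O) ∪ maxPrec n J

/-- The permutation `w_M`: the product of the transpositions `s_{i,j}` over `(i,j) ∈ M`,
ordered first by `i` increasing and then by `j` increasing with respect to `⋖`
(the leftmost factor acts last). -/
def wPerm (n : ℕ) (M : Finset (ℤ × ℤ)) : Equiv.Perm ℤ :=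
  (((posList n).filter fun p => decide (p ∈ M)).map fun p => Equiv.swap p.1 p.2).prod

/-- `w^{O,J} = w_O⁻¹ ⬝ w_{M_O(J)}`. -/
def wOJ (n : ℕ) (O J : Finset (ℤ × ℤ)) : Equiv.Perm ℤ :=
  (wPerm n O)⁻¹ * wPerm n (MO n O J)

/-- The principal order ideal `⟨i,j⟩` of `(i,j) ∈ P`. -/
def princ (n : ℕ) (p : ℤ × ℤ) : Finset (ℤ × ℤ) := (Pfin n).filter fun q => ple n q p

/-- `r(i,j) = w^{O,⟨i,j⟩}(i)`. -/
def rMap (n : ℕ) (O : Finset (ℤ × ℤ)) (i j : ℤ) : ℤ := wOJ n O (princ n (i, j)) i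

/-- Inverse of `ordKey` (on the relevant range `[1, 2n]`). -/
def invOrdKey (n : ℕ) (t : ℤ) : ℤ := if t ≤ (n : ℤ) then t else t - (2 * n + 1)

/-- The `⋖`-maximal `j'` with `j' ⋖ j` and `(i,j') ∈ O`. -/
def prevO (n : ℕ) (O : Finset (ℤ × ℤ)) (i j : ℤ) : ℤ :=
  invOrdKey n (((((Nfin n).filter fun j' => (i, j') ∈ O ∧ ordKey n j' < ordKey n j).image
    (ordKey n)).max).unbotD 0)

/-- The pipe-dream linear transform `ξ` of `ℝ^P` (coordinates outside `P` are untouched):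
`ξ(ε_{i,i}) = ε_{i,r(i,i)}` and `ξ(ε_{i,j}) = ε_{i,r(i,j)} - ε_{i,r(i,j')}` for `j ≠ i`,
where `j'` is `⋖`-maximal with `j' ⋖ j` and `(i,j') ∈ O`. -/
def xiMap (n : ℕ) (O : Finset (ℤ × ℤ)) (x : (ℤ × ℤ) → ℝ) : (ℤ × ℤ) → ℝ := fun q =>
  if inP n q then
    (∑ j ∈ (Nfin n).filter (fun j => inP n (q.1, j) ∧ rMap n O q.1 j = q.2), x (q.1, j))
    - (∑ j ∈ (Nfin n).filter
        (fun j => inP n (q.1, j) ∧ j ≠ q.1 ∧ rMap n O q.1 (prevO n O q.1 j) = q.2), x (q.1, j))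
  else x q

/-- Indicator vector `1_{M_O(J)} ∈ ℝ^P`. -/
def indicMO (n : ℕ) (O J : Finset (ℤ × ℤ)) : (ℤ × ℤ) → ℝ := fun p =>
  if p ∈ MO n O J then 1 else 0

/-- The fundamental marked chain-order polytope `𝒬_O(ω_k)`:
the convex hull of the vectors `1_{M_O(J)}`, `J ∈ 𝒥ₖ`. -/
def QOfund (n : ℕ) (O : Finset (ℤ × ℤ)) (k : ℕ) : Set ((ℤ × ℤ) → ℝ) :=
  convexHull ℝ {x | ∃ J : Finset (ℤ × ℤ),
    IsIdeal n J ∧ (J ∩ Aset n).card = k ∧ x = indicMO n O J}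

/-- The marked chain-order polytope `𝒬_O(λ)` for `λ = a₁ω₁ + … + a_nω_n`:
the Minkowski sum `a₁𝒬_O(ω₁) + … + a_n𝒬_O(ω_n)`. -/
def QO (n : ℕ) (O : Finset (ℤ × ℤ)) (a : ℕ → ℕ) : Set ((ℤ × ℤ) → ℝ) :=
  ∑ k ∈ Finset.Icc 1 n, a k • QOfund n O k

/-- Integrality (lattice point) predicate. -/
def IsLat (x : (ℤ × ℤ) → ℝ) : Prop := ∀ p, ∃ m : ℤ, x p = m

/-- Type B: `λ(i) = a_i + … + a_{n-1} + a_n/2`. -/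
def lamB (n : ℕ) (a : ℕ → ℕ) (i : ℤ) : ℝ :=
  (∑ t ∈ Finset.Icc i.toNat (n - 1), (a t : ℝ)) + (a n : ℝ) / 2

/-- The type B poset polytope `𝒬^B_O(λ)` (H-description with factor `1/2`
on the coordinates in `B = {(i,-i)}`). -/
def QB (n : ℕ) (O : Finset (ℤ × ℤ)) (lam : ℤ → ℝ) : Set ((ℤ × ℤ) → ℝ) :=
  {x | (∀ i : ℤ, 1 ≤ i → i ≤ (n : ℤ) → x (i, i) = lam i) ∧
    (∀ p, inP n p → 0 ≤ x p) ∧ (∀ p, ¬ inP n p → x p = 0) ∧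
    ∀ (pq rs : ℤ × ℤ) (c : List (ℤ × ℤ)), pq ∈ O → inP n rs →
      (∀ q ∈ c, inP n q ∧ q ∉ O) →
      List.Chain' (plt n) (pq :: (c ++ [rs])) →
      (c.map x).sum ≤ x pq - (if rs.2 = -rs.1 then (1 : ℝ) / 2 else 1) * x rs}

/-- The point `x^{J,D}`. -/
def xJD (n : ℕ) (O J : Finset (ℤ × ℤ)) (D : Finset ℤ) : (ℤ × ℤ) → ℝ := fun p =>
  if p ∈ MO n O J then (if p.2 = -p.1 ∧ p.1 ∉ D then 2 else 1) else 0

/-- The projection `π : ℝ^P → ℝ^{P∖A}` (realized by zeroing the `A`-coordinates). -/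
def piA (x : (ℤ × ℤ) → ℝ) : (ℤ × ℤ) → ℝ := fun p => if p.2 = p.1 then 0 else x p

/-- The transformed type B poset polytope `Π^B_O(λ) = πξ(𝒬^B_O(λ))`. -/
def PiB (n : ℕ) (O : Finset (ℤ × ℤ)) (a : ℕ → ℕ) : Set ((ℤ × ℤ) → ℝ) :=
  (fun x => piA (xiMap n O x)) '' QB n O (lamB n a)

/-- The point `y^D ∈ ℝ^{P∖A}`. -/
def yD (D : Finset ℤ) : (ℤ × ℤ) → ℝ := fun p => if p.2 = -p.1 ∧ p.1 ∈ D then 1 else 0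

/-
An order ideal `J` is the down-closure of its `≺`-maximal elements, and these lie in
`M_O(J) ⊆ J`; so `J` is determined by `M_O(J)`. For `i ≤ k = |J ∩ A|` the diagonal entry
`(i, i)` lies in `M_O(J)`, and row `i` of `M_O(J)` consists of its `⋖`-largest entry `r_i`
together with the entries of `O` that `⋖`-precede it. In the product `w_{M_O(J)}` the rows
with index `> i` fix `i`, row `i` sends it to `r_i`, and the rows with index `< i` then act
by a permutation that depends only on those rows. So the values
`w^{O,J}(i) = w_O⁻¹ w_{M_O(J)}(i)`, `1 ≤ i ≤ k`, recover `M_O(J)` row by row.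
-/

lemma Finset.eq_and_eqOn_of_image_graph_eq {α β : Type*} [DecidableEq α] [DecidableEq β]
    {s t : Finset α} {f g : α → β}
    (h : s.image (fun a => (a, f a)) = t.image (fun a => (a, g a))) :
    s = t ∧ ∀ a ∈ s, f a = g a := by
  have hfst := congrArg (Finset.image Prod.fst) h
  simp only [Finset.image_image, Function.comp_def, Finset.image_id'] at hfst
  refine ⟨hfst, fun a ha => ?_⟩
  obtain ⟨b, -, hb⟩ := Finset.mem_image.1 (h ▸ Finset.mem_image_of_mem (fun a => (a, f a)) ha)
  obtain ⟨rfl, hfg⟩ := Prod.mk.inj hb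
  exact hfg.symm

lemma ordKey_of_pos {n : ℕ} {j : ℤ} (hj : 0 < j) : ordKey n j = j := if_pos hj

lemma ordKey_inj_of_abs_le {n : ℕ} {j j' : ℤ} (hj : |j| ≤ n) (hj' : |j'| ≤ n)
    (h : ordKey n j = ordKey n j') : j = j' := by
  unfold ordKey at h
  rw [abs_le] at hj hj'
  split_ifs at h <;> omega

lemma le_ordKey_of_inP {n : ℕ} {i j : ℤ} (h : inP n (i, j)) : i ≤ ordKey n j := by
  obtain ⟨-, -, h₃, h₄⟩ := h
  dsimp only at h₃ h₄
  unfold ordKey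
  cases abs_cases j <;> split_ifs <;> omega

lemma mem_jList_of_inP {n : ℕ} {i j : ℤ} (h : inP n (i, j)) : j ∈ jList n := by
  obtain ⟨h₁, -, h₃, h₄⟩ := h
  dsimp only at h₁ h₃ h₄
  have : (∃ t < n, (t : ℤ) + 1 = j) ∨ ∃ t < n, (t : ℤ) - n = j := by
    cases abs_cases j
    · exact Or.inl ⟨(j - 1).toNat, by omega, by omega⟩
    · exact Or.inr ⟨(j + n).toNat, by omega, by omega⟩
  simpa [jList] using this

lemma mem_Pfin {n : ℕ} {p : ℤ × ℤ} : p ∈ Pfin n ↔ inP n p := by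
  refine ⟨fun h => (Finset.mem_filter.1 h).2, fun h => Finset.mem_filter.2 ⟨?_, h⟩⟩
  obtain ⟨i, j⟩ := p
  have hi : 1 ≤ i ∧ i ≤ n := ⟨h.1, h.2.1⟩
  have : ∃ t < n, j ∈ jList n ∧ (t : ℤ) + 1 = i :=
    ⟨(i - 1).toNat, by omega, mem_jList_of_inP h, by omega⟩
  simpa [posList] using this

lemma mem_Aset {n : ℕ} {i j : ℤ} : (i, j) ∈ Aset n ↔ 1 ≤ i ∧ i ≤ n ∧ j = i := by
  rw [show (i, j) ∈ Aset n ↔ ∃ t < n, (t : ℤ) + 1 = i ∧ (t : ℤ) + 1 = j by simp [Aset]]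
  constructor
  · rintro ⟨t, ht, rfl, rfl⟩; omega
  · rintro ⟨h₁, h₂, h₃⟩; exact ⟨(i - 1).toNat, by omega, by omega, by omega⟩

lemma ple_trans {n : ℕ} {p q r : ℤ × ℤ} (hpq : ple n p q) (hqr : ple n q r) : ple n p r :=
  ⟨hpq.1.trans hqr.1, hpq.2.trans hqr.2⟩

lemma card_image_diag_Icc (b : ℤ) :
    ((Finset.Icc 1 b).image fun d : ℤ => (d, d)).card = b.toNat := by
  rw [Finset.card_image_of_injective _ fun _ _ h => congrArg Prod.fst h, Int.card_Icc]
  omega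

namespace IsIdeal

variable {n : ℕ} {J : Finset (ℤ × ℤ)}

lemma diag_mem (hJ : IsIdeal n J) {i j m : ℤ} (hp : (i, j) ∈ J) (hm : 1 ≤ m) (hmi : m ≤ i) :
    (m, m) ∈ J := by
  have hP := hJ.1 _ hp
  refine hJ.2 _ hp _ (mem_Pfin.2 ⟨hm, ?_, ?_, ?_⟩) ⟨hmi, ?_⟩ <;> dsimp only
  · exact hmi.trans hP.2.1
  · rw [abs_of_pos (by omega)]
  · rw [abs_of_pos (by omega)]; exact hmi.trans hP.2.1
  · rw [ordKey_of_pos (by omega)]; exact hmi.trans (le_ordKey_of_inP hP)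

lemma diag_mem_iff (hJ : IsIdeal n J) {m : ℤ} :
    (m, m) ∈ J ↔ 1 ≤ m ∧ m ≤ (J ∩ Aset n).card := by
  constructor
  · intro hm
    have hP := hJ.1 _ hm
    have hsub : (Finset.Icc 1 m).image (fun d : ℤ => (d, d)) ⊆ J ∩ Aset n := by
      intro p hp
      obtain ⟨d, hd, rfl⟩ := Finset.mem_image.1 hp
      rw [Finset.mem_Icc] at hd
      exact Finset.mem_inter.2 ⟨hJ.diag_mem hm hd.1 hd.2,
        mem_Aset.2 ⟨hd.1, hd.2.trans hP.2.1, rfl⟩⟩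
    have := Finset.card_le_card hsub
    rw [card_image_diag_Icc] at this
    exact ⟨hP.1, by omega⟩
  · rintro ⟨hm, hmk⟩
    by_contra hnot
    have hsub : J ∩ Aset n ⊆ (Finset.Icc 1 (m - 1)).image (fun d : ℤ => (d, d)) := by
      rintro ⟨d, d'⟩ hp
      obtain ⟨hpJ, hpA⟩ := Finset.mem_inter.1 hp
      obtain ⟨hd, -, rfl⟩ := mem_Aset.1 hpA
      refine Finset.mem_image.2 ⟨d', Finset.mem_Icc.2 ⟨hd, ?_⟩, rfl⟩
      by_contra hdm
      exact hnot (hJ.diag_mem hpJ hm (by omega))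
    have := Finset.card_le_card hsub
    rw [card_image_diag_Icc] at this
    omega

lemma fst_le_card (hJ : IsIdeal n J) {i j : ℤ} (hp : (i, j) ∈ J) :
    i ≤ (J ∩ Aset n).card :=
  (hJ.diag_mem_iff.1 (hJ.diag_mem hp (hJ.1 _ hp).1 le_rfl)).2

lemma exists_maxPrec_ple (hJ : IsIdeal n J) {q : ℤ × ℤ} (hq : q ∈ J) :
    ∃ p ∈ maxPrec n J, ple n q p := by
  obtain ⟨p, hp, hmax⟩ := (J.filter (ple n q)).exists_max_image
    (fun p => p.1 + ordKey n p.2) ⟨q, Finset.mem_filter.2 ⟨hq, le_rfl, le_rfl⟩⟩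
  obtain ⟨hpJ, hqp⟩ := Finset.mem_filter.1 hp
  refine ⟨p, Finset.mem_filter.2 ⟨hpJ, fun p' hp' hpp' => ?_⟩, hqp⟩
  have := hmax p' (Finset.mem_filter.2 ⟨hp', ple_trans hqp hpp'⟩)
  have hkey : ordKey n p'.2 = ordKey n p.2 := by linarith [hpp'.1, hpp'.2]
  exact Prod.ext (by linarith [hpp'.1, hpp'.2])
    (ordKey_inj_of_abs_le (hJ.1 _ hp').2.2.2 (hJ.1 _ hpJ).2.2.2 hkey)

lemma subset_of_maxPrec_subset {J' : Finset (ℤ × ℤ)} (hJ : IsIdeal n J) (hJ' : IsIdeal n J')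
    (h : maxPrec n J ⊆ J') : J ⊆ J' := by
  intro q hq
  obtain ⟨p, hp, hqp⟩ := hJ.exists_maxPrec_ple hq
  exact hJ'.2 p (h hp) q (mem_Pfin.2 (hJ.1 q hq)) hqp

end IsIdeal

lemma prod_map_swap_apply_self {α β : Type*} [DecidableEq α] [Preorder β] (f : α → β)
    (x : α) : ∀ {l : List α}, l.Pairwise (fun a b => f a < f b) → (∀ a ∈ l, f x ≤ f a) →
      (l.map (Equiv.swap x)).prod x = l.getLastD x
  | [], _, _ => rfl
  | [a], _, _ => by simp
  | a :: b :: t, hl, hx => by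
    have ih := prod_map_swap_apply_self f x (List.pairwise_cons.1 hl).2
      fun c hc => hx c (List.mem_cons_of_mem a hc)
    have hlast : (b :: t).getLastD x ∈ b :: t := by
      rw [List.getLastD_cons]; exact List.getLastD_mem_cons
    have hlt : f a < f ((b :: t).getLastD x) := (List.pairwise_cons.1 hl).1 _ hlast
    rw [List.map_cons, List.prod_cons, Equiv.Perm.mul_apply, ih,
      Equiv.swap_apply_of_ne_of_ne (fun h => (h ▸ hlt).not_ge (hx a List.mem_cons_self))
        (fun h => (h ▸ hlt).ne rfl)]
    simp

def rowCols (n : ℕ) (M : Finset (ℤ × ℤ)) (i : ℤ) : List ℤ :=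
  (jList n).filter fun j => decide ((i, j) ∈ M)

def rowPerm (n : ℕ) (M : Finset (ℤ × ℤ)) (i : ℤ) : Equiv.Perm ℤ :=
  ((rowCols n M i).map (Equiv.swap i)).prod

def rowsPerm (n : ℕ) (M : Finset (ℤ × ℤ)) (m : ℕ) : Equiv.Perm ℤ :=
  ((List.range m).map fun a : ℕ => rowPerm n M ((a : ℤ) + 1)).prod

lemma jList_pairwise (n : ℕ) : (jList n).Pairwise (fun a b => ordKey n a < ordKey n b) := by
  simp only [jList, List.pure_def, List.bind_eq_flatMap, ← List.map_eq_flatMap, List.map_map,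
    List.pairwise_append, List.pairwise_map, Function.comp_apply, List.mem_map, List.mem_range,
    forall_exists_index, and_imp, forall_apply_eq_imp_iff₂]
  refine ⟨List.pairwise_lt_range.imp fun h => ?_,
    List.pairwise_lt_range.imp_of_mem fun ha hb h => ?_, fun a ha b hb => ?_⟩
  all_goals
    try rw [List.mem_range] at ha hb
    unfold ordKey
    split_ifs <;> omega

lemma wPerm_eq_rowsPerm (n : ℕ) (M : Finset (ℤ × ℤ)) : wPerm n M = rowsPerm n M n := by
  simp [wPerm, rowsPerm, rowPerm, rowCols, posList, List.flatMap_def, List.prod_flatten,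
    List.filter_map, Function.comp_def]

section RowPerm

variable {n : ℕ} {M : Finset (ℤ × ℤ)}

lemma mem_rowCols (hM : ∀ p ∈ M, inP n p) {i j : ℤ} : j ∈ rowCols n M i ↔ (i, j) ∈ M := by
  simpa [rowCols] using fun h => mem_jList_of_inP (hM _ h)

lemma rowPerm_apply_of_lt (hM : ∀ p ∈ M, inP n p) {i x : ℤ} (hx : 0 < x) (hxi : x < i) :
    rowPerm n M i x = x := by
  have : rowPerm n M i ∈ MulAction.stabilizer (Equiv.Perm ℤ) x := by
    refine Subgroup.list_prod_mem _ fun g hg => ?_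
    obtain ⟨j, hj, rfl⟩ := List.mem_map.1 hg
    have hij : i ≤ |j| := (hM _ ((mem_rowCols hM).1 hj)).2.2.1
    refine Equiv.swap_apply_of_ne_of_ne hxi.ne fun h => ?_
    rw [← h, abs_of_pos hx] at hij
    omega
  exact this

lemma wPerm_apply (hM : ∀ p ∈ M, inP n p) {m : ℕ} (hm : m < n) :
    wPerm n M ((m : ℤ) + 1) = rowsPerm n M m (rowPerm n M ((m : ℤ) + 1) ((m : ℤ) + 1)) := by
  have hstab : ∀ b, m + 1 ≤ b →
      rowsPerm n M b ((m : ℤ) + 1) = rowsPerm n M (m + 1) ((m : ℤ) + 1) := by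
    intro b hb
    induction b, hb using Nat.le_induction with
    | base => rfl
    | succ b hb ih =>
      rw [← ih]
      simp only [rowsPerm, List.range_succ, List.map_append, List.map_cons, List.map_nil,
        List.prod_append, List.prod_cons, List.prod_nil, mul_one, Equiv.Perm.mul_apply]
      rw [rowPerm_apply_of_lt hM (by omega) (by omega)]
  rw [wPerm_eq_rowsPerm, hstab n hm]
  simp [rowsPerm, List.range_succ]

lemma rowPerm_congr {M' : Finset (ℤ × ℤ)} {i : ℤ} (h : ∀ j, (i, j) ∈ M ↔ (i, j) ∈ M') :
    rowPerm n M i = rowPerm n M' i := by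
  simp only [rowPerm, rowCols, h]

lemma rowsPerm_congr {M' : Finset (ℤ × ℤ)} {m : ℕ}
    (h : ∀ a < m, ∀ j, ((a : ℤ) + 1, j) ∈ M ↔ ((a : ℤ) + 1, j) ∈ M') :
    rowsPerm n M m = rowsPerm n M' m := by
  unfold rowsPerm
  congr 1
  exact List.map_congr_left fun a ha => rowPerm_congr (h a (List.mem_range.1 ha))

lemma rowPerm_apply_self (hM : ∀ p ∈ M, inP n p) {i : ℤ} (hii : (i, i) ∈ M) :
    (i, rowPerm n M i i) ∈ M ∧ ∀ j, (i, j) ∈ M → ordKey n j ≤ ordKey n (rowPerm n M i i) := by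
  have hsorted : (rowCols n M i).Pairwise (fun a b => ordKey n a < ordKey n b) :=
    (jList_pairwise n).filter _
  have hmin : ∀ j ∈ rowCols n M i, ordKey n i ≤ ordKey n j := fun j hj => by
    rw [ordKey_of_pos (hM _ hii).1]
    exact le_ordKey_of_inP (hM _ ((mem_rowCols hM).1 hj))
  have hne : rowCols n M i ≠ [] := List.ne_nil_of_mem ((mem_rowCols hM).2 hii)
  have hlast : rowPerm n M i i = (rowCols n M i).getLast hne := by
    rw [rowPerm, prod_map_swap_apply_self (ordKey n) i hsorted hmin, List.getLastD_eq_getLast?,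
      List.getLast?_eq_some_getLast hne, Option.getD_some]
  rw [hlast]
  refine ⟨(mem_rowCols hM).1 (List.getLast_mem hne), fun j hj => ?_⟩
  exact (hsorted.imp le_of_lt).rel_getLast_of_rel_getLast_getLast ((mem_rowCols hM).2 hj) le_rfl

end RowPerm

section MO

variable {n : ℕ} {O J : Finset (ℤ × ℤ)}

lemma MO_subset : MO n O J ⊆ J :=
  Finset.union_subset Finset.inter_subset_left (Finset.filter_subset _ _)

lemma IsIdeal.eq_of_MO_eq {J' : Finset (ℤ × ℤ)} (hJ : IsIdeal n J) (hJ' : IsIdeal n J')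
    (h : MO n O J = MO n O J') : J = J' := by
  have hsub : ∀ {J₁ J₂}, IsIdeal n J₁ → IsIdeal n J₂ → MO n O J₁ = MO n O J₂ → J₁ ⊆ J₂ :=
    fun {J₁ J₂} h₁ h₂ h => h₁.subset_of_maxPrec_subset h₂ <| calc
      maxPrec n J₁ ⊆ MO n O J₁ := Finset.subset_union_right
      _ = MO n O J₂ := h
      _ ⊆ J₂ := MO_subset
  exact (hsub hJ hJ' h).antisymm (hsub hJ' hJ h.symm)

lemma IsIdeal.diag_mem_MO (hA : Aset n ⊆ O) (hJ : IsIdeal n J) {i : ℤ} (hi : 1 ≤ i)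
    (hik : i ≤ (J ∩ Aset n).card) : (i, i) ∈ MO n O J := by
  have hiJ := hJ.diag_mem_iff.2 ⟨hi, hik⟩
  exact Finset.mem_union_left _
    (Finset.mem_inter.2 ⟨hiJ, hA (mem_Aset.2 ⟨hi, (hJ.1 _ hiJ).2.1, rfl⟩)⟩)

lemma IsIdeal.mem_MO_iff (hO : O ⊆ Pfin n) (hJ : IsIdeal n J) {i r : ℤ}
    (hr : (i, r) ∈ MO n O J) (hmax : ∀ j, (i, j) ∈ MO n O J → ordKey n j ≤ ordKey n r) {j : ℤ} :
    (i, j) ∈ MO n O J ↔ ordKey n j ≤ ordKey n r ∧ ((i, j) ∈ O ∨ j = r) := by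
  have hle : ∀ {j}, ordKey n j ≤ ordKey n r → ple n (i, j) (i, r) := fun h => ⟨le_rfl, h⟩
  constructor
  · intro h
    refine ⟨hmax j h, ?_⟩
    rcases Finset.mem_union.1 h with h | h
    · exact Or.inl (Finset.mem_inter.1 h).2
    · exact Or.inr (congrArg Prod.snd ((Finset.mem_filter.1 h).2 _ (MO_subset hr)
        (hle (hmax j (Finset.mem_union_right _ h))))).symm
  · rintro ⟨hjr, hjO | rfl⟩
    · exact Finset.mem_union_left _
        (Finset.mem_inter.2 ⟨hJ.2 _ (MO_subset hr) _ (hO hjO) (hle hjr), hjO⟩)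
    · exact hr

end MO

section RecoverMO

variable {n : ℕ} {O J₁ J₂ : Finset (ℤ × ℤ)}

lemma MO_row_eq_of_wPerm_eq (hA : Aset n ⊆ O) (hO : O ⊆ Pfin n) (hJ₁ : IsIdeal n J₁)
    (hJ₂ : IsIdeal n J₂) {m : ℕ} (hm₁ : m < (J₁ ∩ Aset n).card) (hm₂ : m < (J₂ ∩ Aset n).card)
    (hrows : ∀ a < m, ∀ j, ((a : ℤ) + 1, j) ∈ MO n O J₁ ↔ ((a : ℤ) + 1, j) ∈ MO n O J₂)
    (hw : wPerm n (MO n O J₁) ((m : ℤ) + 1) = wPerm n (MO n O J₂) ((m : ℤ) + 1)) (j : ℤ) :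
    ((m : ℤ) + 1, j) ∈ MO n O J₁ ↔ ((m : ℤ) + 1, j) ∈ MO n O J₂ := by
  have hM₁ : ∀ p ∈ MO n O J₁, inP n p := fun p hp => hJ₁.1 p (MO_subset hp)
  have hM₂ : ∀ p ∈ MO n O J₂, inP n p := fun p hp => hJ₂.1 p (MO_subset hp)
  have hd₁ := hJ₁.diag_mem_MO hA (i := (m : ℤ) + 1) (by omega) (by omega)
  have hd₂ := hJ₂.diag_mem_MO hA (i := (m : ℤ) + 1) (by omega) (by omega)
  have hmn : m < n := by have := (hM₁ _ hd₁).2.1; omega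
  rw [wPerm_apply hM₁ hmn, wPerm_apply hM₂ hmn, rowsPerm_congr hrows] at hw
  obtain ⟨hr₁, hmax₁⟩ := rowPerm_apply_self hM₁ hd₁
  obtain ⟨hr₂, hmax₂⟩ := rowPerm_apply_self hM₂ hd₂
  rw [hJ₁.mem_MO_iff hO hr₁ hmax₁, hJ₂.mem_MO_iff hO hr₂ hmax₂, Equiv.injective _ hw]

lemma MO_eq_of_wPerm_eq (hA : Aset n ⊆ O) (hO : O ⊆ Pfin n) (hJ₁ : IsIdeal n J₁)
    (hJ₂ : IsIdeal n J₂) (hk : (J₁ ∩ Aset n).card = (J₂ ∩ Aset n).card)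
    (hw : ∀ m < (J₁ ∩ Aset n).card,
      wPerm n (MO n O J₁) ((m : ℤ) + 1) = wPerm n (MO n O J₂) ((m : ℤ) + 1)) :
    MO n O J₁ = MO n O J₂ := by
  have hrows : ∀ m ≤ (J₁ ∩ Aset n).card,
      ∀ a < m, ∀ j, ((a : ℤ) + 1, j) ∈ MO n O J₁ ↔ ((a : ℤ) + 1, j) ∈ MO n O J₂ := by
    intro m
    induction m with
    | zero => simp
    | succ m ih =>
      intro hm a ha
      rcases Nat.lt_succ_iff_lt_or_eq.1 ha with ha | rfl
      · exact ih (by omega) a ha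
      · exact MO_row_eq_of_wPerm_eq hA hO hJ₁ hJ₂ (by omega) (by omega) (ih (by omega))
          (hw a (by omega))
  ext ⟨i, j⟩
  by_cases hi : 1 ≤ i ∧ i ≤ (J₁ ∩ Aset n).card
  · obtain ⟨a, rfl⟩ : ∃ a : ℕ, i = (a : ℤ) + 1 := ⟨(i - 1).toNat, by omega⟩
    exact hrows _ le_rfl a (by omega) j
  · have hrow : ∀ {J}, IsIdeal n J → (J ∩ Aset n).card = (J₁ ∩ Aset n).card →
        (i, j) ∉ MO n O J := fun hJ hJk h =>
      hi ⟨(hJ.1 _ (MO_subset h)).1, hJk ▸ hJ.fst_le_card (MO_subset h)⟩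
    exact iff_of_false (hrow hJ₁ rfl) (hrow hJ₂ hk.symm)

end RecoverMO

/-- The monomials `z^{ξ(1_{M_O(J)})} = ∏_{i=1}^k z_{i,w^{O,J}(i)}` over all
order ideals `J` are pairwise distinct; equivalently, the map
`J ↦ {(i, w^{O,J}(i)) : 1 ≤ i ≤ |J ∩ A|}` is injective on order ideals of `P`. -/
theorem stmt13 (n : ℕ) (O : Finset (ℤ × ℤ)) (hA : Aset n ⊆ O) (hO : O ⊆ Pfin n)
    (J₁ J₂ : Finset (ℤ × ℤ)) (h1 : IsIdeal n J₁) (h2 : IsIdeal n J₂)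
    (heq : (Finset.Icc (1 : ℤ) (((J₁ ∩ Aset n).card : ℤ))).image
        (fun i => ((i, wOJ n O J₁ i) : ℤ × ℤ))
      = (Finset.Icc (1 : ℤ) (((J₂ ∩ Aset n).card : ℤ))).image
        (fun i => ((i, wOJ n O J₂ i) : ℤ × ℤ))) :
    J₁ = J₂ := by
  obtain ⟨hIcc, hwOJ⟩ := Finset.eq_and_eqOn_of_image_graph_eq heq
  have hk : (J₁ ∩ Aset n).card = (J₂ ∩ Aset n).card := by
    simpa using congrArg Finset.card hIcc
  refine h1.eq_of_MO_eq h2 (MO_eq_of_wPerm_eq hA hO h1 h2 hk fun m hm => ?_)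
  exact (wPerm n O)⁻¹.injective (hwOJ ((m : ℤ) + 1) (Finset.mem_Icc.2 ⟨by omega, by omega⟩))

end
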